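/- arXiv:1612.07122 — 4 statements merged into one kernel-verified Lean document; each statement's English description precedes it below -/
import Mathlib

section
/- Let j be a natural number, V ≥ 1 a natural number, and s a real number with 0 ≤ s and j·s ≤ 1. Then φ_j(s, V−1) ≤ φ_j(s, V); that is, φ_j(s, ·) is nondecreasing in its second argument. -/
/-!
`phi j s V` is the `j`-th forward difference, with step `s`, of `x ↦ x ^ V` at `1 - j * s`, and
its increment in `V` is `j * s` times a `(j - 1)`-th difference of `x ↦ x ^ (V - 1)` at the same
point. Iterated differences of powers with nonnegative step at a nonnegative point are
nonnegative, because `Δ_[h] (x ^ n) = ∑_{i < n} C(n, i) h ^ (n - i) x ^ i` is a nonnegative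
combination of lower powers.
-/

/-- `φ_j(s,V) = ∑_{ℓ=0}^{j} (−1)^ℓ·C(j,ℓ)·(1 − ℓs)^V`. -/
noncomputable def phi (j : ℕ) (s : ℝ) (V : ℕ) : ℝ :=
  ∑ ℓ ∈ Finset.range (j + 1), (-1 : ℝ) ^ ℓ * (Nat.choose j ℓ : ℝ) * (1 - (ℓ : ℝ) * s) ^ V

open Finset fwdDiff

theorem fwdDiff_pow_eq_sum (h : ℝ) (n : ℕ) :
    Δ_[h] (fun x : ℝ => x ^ n) =
      ∑ i ∈ range n, ((n.choose i : ℝ) * h ^ (n - i)) • fun x : ℝ => x ^ i := by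
  ext x
  simp only [fwdDiff, add_pow, sum_range_succ, Nat.choose_self, Nat.sub_self, Finset.sum_apply,
    Pi.smul_apply, smul_eq_mul]
  push_cast
  rw [add_sub_assoc, pow_zero]
  ring_nf

theorem fwdDiff_iter_pow_nonneg {h b : ℝ} (hh : 0 ≤ h) (hb : 0 ≤ b) (k n : ℕ) :
    0 ≤ (Δ_[h])^[k] (fun x : ℝ => x ^ n) b := by
  induction k generalizing n with
  | zero => exact pow_nonneg hb n
  | succ k ih =>
    rw [Function.iterate_succ_apply, fwdDiff_pow_eq_sum, fwdDiff_iter_finsetSum, Finset.sum_apply]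
    refine sum_nonneg fun i _ => ?_
    rw [fwdDiff_iter_const_smul, Pi.smul_apply, smul_eq_mul]
    exact mul_nonneg (by positivity) (ih i)

theorem sum_alternating_choose_eq_fwdDiff_iter (f : ℝ → ℝ) (a h : ℝ) (j : ℕ) :
    ∑ ℓ ∈ range (j + 1), (-1 : ℝ) ^ ℓ * j.choose ℓ * f (a - ℓ * h) =
      (Δ_[h])^[j] f (a - j * h) := by
  rw [fwdDiff_iter_eq_sum_shift, ← sum_range_reflect]
  refine sum_congr rfl fun ℓ hℓ => ?_
  have hℓ : ℓ ≤ j := Nat.lt_succ_iff.mp (mem_range.mp hℓ)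
  rw [Nat.add_sub_cancel, Nat.choose_symm hℓ, Nat.cast_sub hℓ, nsmul_eq_mul, zsmul_eq_mul]
  push_cast
  ring_nf

theorem phi_succ_sub_phi (j W : ℕ) (s : ℝ) :
    phi (j + 1) s (W + 1) - phi (j + 1) s W =
      (j + 1) * s * (Δ_[s])^[j] (fun x : ℝ => x ^ W) (1 - (j + 1) * s) := by
  have hcoeff (i : ℕ) : ((i : ℝ) + 1) * (j + 1).choose (i + 1) = (j + 1) * j.choose i := by
    rw [mul_comm]
    exact_mod_cast (Nat.add_one_mul_choose_eq j i).symm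
  calc phi (j + 1) s (W + 1) - phi (j + 1) s W
      = ∑ ℓ ∈ range (j + 2), -(ℓ * s) * ((-1 : ℝ) ^ ℓ * (j + 1).choose ℓ * (1 - ℓ * s) ^ W) := by
        rw [phi, phi, ← sum_sub_distrib]
        exact sum_congr rfl fun ℓ _ => by ring
    _ = (j + 1) * s * ∑ i ∈ range (j + 1), (-1 : ℝ) ^ i * j.choose i * (1 - s - i * s) ^ W := by
        rw [sum_range_succ', mul_sum]
        simp only [Nat.cast_zero, zero_mul, neg_zero, add_zero, Nat.cast_add, Nat.cast_one]
        refine sum_congr rfl fun i _ => ?_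
        linear_combination ((-1 : ℝ) ^ i * s * (1 - (i + 1) * s) ^ W) * hcoeff i
    _ = _ := by
        rw [sum_alternating_choose_eq_fwdDiff_iter (· ^ W) (1 - s) s j]
        ring_nf

/-- `φ_j(s,·)` is nondecreasing in its second argument, for `0 ≤ s` with `j·s ≤ 1`. -/
theorem phi_mono_in_V (j V : ℕ) (hV : 1 ≤ V) (s : ℝ) (hs0 : 0 ≤ s)
    (hjs : (j : ℝ) * s ≤ 1) :
    phi j s (V - 1) ≤ phi j s V := by
  obtain ⟨W, rfl⟩ := Nat.exists_eq_add_of_le' hV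
  rw [Nat.add_sub_cancel]
  rcases j with _ | j
  · simp [phi]
  · rw [← sub_nonneg, phi_succ_sub_phi]
    push_cast at hjs
    exact mul_nonneg (by positivity) (fwdDiff_iter_pow_nonneg hs0 (by linarith) j W)
end

section
/- Let j ≤ V be natural numbers and let s ≥ 0 be a real number with s·V·j ≤ 2. Then φ_j(s, V) ≤ (V!/(V−j)!)·s^j, and consequently φ_j(s, V) ≤ (V·s)^j. -/
open Finset Set fwdDiff

section IteratedDifference

variable {𝕜 E : Type*} [NontriviallyNormedField 𝕜] [NormedAddCommGroup E] [NormedSpace 𝕜 E]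

theorem ContDiff.fwdDiff {n : WithTop ℕ∞} {f : 𝕜 → E} (hf : ContDiff 𝕜 n f) (h : 𝕜) :
    ContDiff 𝕜 n (Δ_[h] f) :=
  (hf.comp (contDiff_id.add contDiff_const)).sub hf

theorem iteratedDeriv_fwdDiff {n : ℕ} {f : 𝕜 → E} (hf : ContDiff 𝕜 n f) (h : 𝕜) :
    iteratedDeriv n (Δ_[h] f) = Δ_[h] (iteratedDeriv n f) := by
  ext t
  have hshift : ContDiff 𝕜 n fun z ↦ f (z + h) := hf.comp (contDiff_id.add contDiff_const)
  change iteratedDeriv n (fun z ↦ f (z + h) - f z) t = _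
  rw [iteratedDeriv_fun_sub hshift.contDiffAt hf.contDiffAt, iteratedDeriv_comp_add_const, fwdDiff]

end IteratedDifference

theorem norm_fwdDiff_iter_le {E : Type*} [NormedAddCommGroup E] [NormedSpace ℝ E]
    {n : ℕ} {f : ℝ → E} (hf : ContDiff ℝ n f) {h : ℝ} (hh : 0 ≤ h) {y M : ℝ}
    (hM : ∀ t ∈ Icc y (y + n * h), ‖iteratedDeriv n f t‖ ≤ M) :
    ‖(Δ_[h])^[n] f y‖ ≤ M * h ^ n := by
  induction n generalizing f M with
  | zero => simpa using hM y (by simp)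
  | succ n ih =>
    have hstep : ∀ t ∈ Icc y (y + n * h), ‖iteratedDeriv n (Δ_[h] f) t‖ ≤ M * h := by
      intro t ⟨hyt, hty⟩
      rw [iteratedDeriv_fwdDiff (hf.of_le (by norm_cast; omega)), fwdDiff]
      have hderiv : ∀ x ∈ Icc t (t + h), HasDerivWithinAt (iteratedDeriv n f)
          (iteratedDeriv (n + 1) f x) (Icc t (t + h)) x := fun x _ ↦ by
        rw [iteratedDeriv_succ]
        exact ((hf.differentiable_iteratedDeriv' n).differentiableAt.hasDerivAt).hasDerivWithinAt
      have hbound : ∀ x ∈ Ico t (t + h), ‖iteratedDeriv (n + 1) f x‖ ≤ M := fun x hx ↦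
        hM x ⟨by linarith [hx.1], by push_cast; linarith [hx.2]⟩
      simpa using norm_image_sub_le_of_norm_deriv_le_segment' hderiv hbound (t + h)
        ⟨by linarith, le_rfl⟩
    rw [Function.iterate_succ_apply, pow_succ, mul_comm (h ^ n), ← mul_assoc]
    exact ih ((hf.of_le (by norm_cast; omega)).fwdDiff h) hstep

theorem phi_eq_fwdDiff_iter (j : ℕ) (s : ℝ) (V : ℕ) :
    phi j s V = (Δ_[s])^[j] (· ^ V) (1 - j * s) := by
  rw [phi, fwdDiff_iter_eq_sum_shift, ← sum_range_reflect]
  refine sum_congr rfl fun k hk ↦ ?_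
  have hkj : k ≤ j := Nat.lt_succ_iff.mp (mem_range.mp hk)
  rw [Nat.add_sub_cancel, Nat.choose_symm hkj, zsmul_eq_mul, nsmul_eq_mul, Nat.cast_sub hkj]
  push_cast
  ring_nf

theorem Nat.cast_descFactorial_eq_factorial_div {K : Type*} [Field K] [CharZero K] {n k : ℕ}
    (hkn : k ≤ n) : (n.descFactorial k : K) = n.factorial / (n - k).factorial := by
  rw [eq_div_iff (Nat.cast_ne_zero.mpr (Nat.factorial_ne_zero _)),
    ← Nat.factorial_mul_descFactorial hkn]
  push_cast
  ring

theorem abs_phi_le_descFactorial_mul_pow {j V : ℕ} {s : ℝ} (hs0 : 0 ≤ s) (hjs : j * s ≤ 2) :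
    |phi j s V| ≤ V.descFactorial j * s ^ j := by
  rw [phi_eq_fwdDiff_iter]
  refine norm_fwdDiff_iter_le (f := (· ^ V)) (contDiff_id.pow V) hs0 fun t ⟨ht₁, ht₂⟩ ↦ ?_
  have ht : |t| ≤ 1 := abs_le.mpr ⟨by linarith, by linarith⟩
  rw [iteratedDeriv_pow, norm_mul, Real.norm_natCast, norm_pow, Real.norm_eq_abs]
  exact mul_le_of_le_one_right (by positivity) (pow_le_one₀ (abs_nonneg t) ht)

/-- If `j ≤ V`, `s ≥ 0` and `s·V·j ≤ 2`, then `φ_j(s,V) ≤ (V!/(V−j)!)·s^j ≤ (V·s)^j`. -/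
theorem phi_upper_bound (j V : ℕ) (hjV : j ≤ V) (s : ℝ) (hs0 : 0 ≤ s)
    (hsVj : s * (V : ℝ) * (j : ℝ) ≤ 2) :
    phi j s V ≤ ((V.factorial : ℝ) / ((V - j).factorial : ℝ)) * s ^ j ∧
      phi j s V ≤ ((V : ℝ) * s) ^ j := by
  have hjs : (j : ℝ) * s ≤ 2 := by
    rcases j.eq_zero_or_pos with rfl | hj
    · simp
    · have hV : (1 : ℝ) ≤ V := by exact_mod_cast hj.trans_le hjV
      nlinarith [mul_nonneg (Nat.cast_nonneg j) hs0]
  have hphi : phi j s V ≤ V.descFactorial j * s ^ j :=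
    (le_abs_self _).trans (abs_phi_le_descFactorial_mul_pow hs0 hjs)
  refine ⟨by rwa [← Nat.cast_descFactorial_eq_factorial_div hjV], hphi.trans ?_⟩
  rw [mul_pow]
  gcongr
  exact_mod_cast Nat.descFactorial_le_pow V j
end

section
/- Let j ≤ V be natural numbers and s a real number. Then φ_j(s, V) = (V!·s^j/(V−j)!) · ∑_{u=0}^{V−j} (−1)^u·s^u · ( j!·(V−j)! / ((u+j)!·(V−u−j)!) ) · S(j+u, j); equivalently, φ_j(s,V) expands as a polynomial in s whose coefficient structure is governed by Stirling numbers of the second kind. -/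
/-- The Stirling number of the second kind,
`S(n,k) = (1/k!)·∑_{i=0}^{k} (−1)^{k−i}·C(k,i)·i^n`. -/
noncomputable def stirlingSecond (n k : ℕ) : ℝ :=
  (1 / (k.factorial : ℝ)) *
    ∑ i ∈ Finset.range (k + 1), (-1 : ℝ) ^ (k - i) * (Nat.choose k i : ℝ) * (i : ℝ) ^ n

open Finset
open scoped Nat fwdDiff

lemma stirlingSecond_eq_fwdDiff_iter (n k : ℕ) :
    stirlingSecond n k = (Δ_[1])^[k] (fun r : ℝ ↦ r ^ n) 0 / k ! := by
  rw [fwdDiff_iter_eq_sum_shift, stirlingSecond]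
  simp [zsmul_eq_mul, div_eq_inv_mul]

lemma stirlingSecond_eq_zero_of_lt {n k : ℕ} (h : n < k) : stirlingSecond n k = 0 := by
  simp [stirlingSecond_eq_fwdDiff_iter, fwdDiff_iter_pow_eq_zero_of_lt h]

lemma sum_range_neg_one_pow_mul_choose_mul_pow (j n : ℕ) :
    ∑ ℓ ∈ range (j + 1), (-1 : ℝ) ^ ℓ * j.choose ℓ * (ℓ : ℝ) ^ n
      = (-1) ^ j * j ! * stirlingSecond n j := by
  rw [stirlingSecond, ← mul_assoc, mul_assoc _ _ (1 / _), mul_one_div_cancel (by positivity),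
    mul_one, mul_sum]
  refine sum_congr rfl fun ℓ hℓ ↦ ?_
  rw [← pow_sub_mul_pow (-1 : ℝ) (mem_range_succ_iff.1 hℓ)]
  ring_nf
  simp

lemma phi_eq_sum_choose_mul_stirlingSecond (j V : ℕ) (s : ℝ) :
    phi j s V
      = (-1) ^ j * j ! * ∑ n ∈ range (V + 1), V.choose n * (-s) ^ n * stirlingSecond n j := by
  have h (ℓ : ℝ) : 1 - ℓ * s = ℓ * -s + 1 := by ring
  simp_rw [phi, h, add_pow, one_pow, mul_one, mul_sum]
  rw [sum_comm]
  refine sum_congr rfl fun n _ ↦ ?_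
  rw [mul_left_comm, ← sum_range_neg_one_pow_mul_choose_mul_pow, mul_sum]
  refine sum_congr rfl fun ℓ _ ↦ ?_
  ring

/-- Polynomial expansion of `φ_j(·,V)` in terms of Stirling numbers of the second kind:
`φ_j(s,V) = (V!·s^j/(V−j)!)·∑_{u=0}^{V−j} (−1)^u·s^u·(j!·(V−j)!/((u+j)!·(V−u−j)!))·S(j+u,j)`. -/
theorem phi_stirling_expansion (j V : ℕ) (hjV : j ≤ V) (s : ℝ) :
    phi j s V
      = ((V.factorial : ℝ) * s ^ j / ((V - j).factorial : ℝ)) *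
        ∑ u ∈ Finset.range (V - j + 1),
          (-1 : ℝ) ^ u * s ^ u *
            ((j.factorial : ℝ) * ((V - j).factorial : ℝ) /
              (((u + j).factorial : ℝ) * ((V - u - j).factorial : ℝ))) *
            stirlingSecond (j + u) j := by
  rw [phi_eq_sum_choose_mul_stirlingSecond,
    ← sum_range_add_sum_Ico _ (Nat.le_add_right_of_le hjV),
    sum_eq_zero fun n hn ↦ by rw [stirlingSecond_eq_zero_of_lt (mem_range.1 hn), mul_zero],
    zero_add, sum_Ico_eq_sum_range, show V + 1 - j = V - j + 1 by omega, mul_sum, mul_sum]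
  refine sum_congr rfl fun u hu ↦ ?_
  have hjuV : j + u ≤ V := by have := mem_range.1 hu; omega
  rw [Nat.cast_choose ℝ hjuV, add_comm u j, show V - u - j = V - (j + u) by omega, pow_add,
    neg_pow s, neg_pow s]
  have hsign : (-1 : ℝ) ^ j * (-1) ^ j = 1 := by rw [← mul_pow]; norm_num
  field_simp
  linear_combination s ^ j * s ^ u * stirlingSecond (j + u) j * hsign
end

section
/- Consider the near-constant column weight design with N items, T tests, per-item weight L, and defective set 𝒦 of size K. Fix a defective item i ∈ 𝒦, let A_i be the event that every test containing item i also contains at least one item of 𝒦∖{i}, and let W_{𝒦∖i} be the number of tests containing at least one item of 𝒦∖{i}. Then (i) for every w, P( A_i | W_{𝒦∖i} = w ) = (w/T)^L, and consequently (ii) for every real c₁ with 0 < c₁ ≤ 1, P(A_i) ≥ c₁^L · P( W_{𝒦∖i} ≥ c₁·T ). -/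
/-- The number of tests containing at least one item of `M`, under the column representation
`X : Fin N → Fin L → Fin T` (item `i` is placed in the tests `X i l`, `l : Fin L`). -/
def coveredTests {N T L : ℕ} (M : Finset (Fin N)) (X : Fin N → Fin L → Fin T) : ℕ :=
  (Finset.univ.filter (fun t : Fin T => ∃ j ∈ M, ∃ l, X j l = t)).card

/-- Item `i` is masked by `𝒦 ∖ {i}`: every test containing `i` also contains at least one item
of `𝒦 ∖ {i}`. -/
def Masked {N T L : ℕ} (𝒦 : Finset (Fin N)) (i : Fin N) (X : Fin N → Fin L → Fin T) : Prop :=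
  ∀ l : Fin L, ∃ j ∈ 𝒦, j ≠ i ∧ ∃ l', X j l' = X i l

/-! Write `S(X)` for the set of tests covered by `𝒦 ∖ {i}`. It does not depend on the column
`X i`, and `i` is masked exactly when all `L` entries of `X i` lie in `S(X)`. Resampling the
column `X i`, i.e. the involution `(X, a) ↦ (X[i ↦ a], X i)`, gives
`T^L · #{X | Masked X ∧ p X} = ∑_{X | p X} |S(X)|^L` for every event `p` that does not involve
`X i`. For `p = {W = w}` every term equals `w^L`, which is (i); for `p` trivial, keeping only the
terms with `|S(X)| ≥ c₁ T` gives (ii). -/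

open Finset Function Fintype

theorem card_mul_card_filter_apply_mem {ι α : Type*} [Fintype ι] [DecidableEq ι] [Fintype α]
    [DecidableEq α] (i : ι) (A : (ι → α) → Finset α) (hA : ∀ X a, A (update X i a) = A X) :
    card α * #{X | X i ∈ A X} = ∑ X, #(A X) := by
  let φ : Equiv.Perm ((ι → α) × α) :=
    Involutive.toPerm (fun p ↦ (update p.1 i p.2, p.1 i)) fun p ↦ by simp
  calc card α * #{X | X i ∈ A X}
      = #{p : (ι → α) × α | p.1 i ∈ A p.1} := by
        rw [← univ_product_univ, filter_product_left (fun X ↦ X i ∈ A X), card_product, card_univ,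
          mul_comm]
    _ = #{p : (ι → α) × α | p.2 ∈ A p.1} :=
        card_equiv φ fun p ↦ by simp [φ, Involutive.toPerm, hA]
    _ = ∑ X, #(A X) := by
        rw [card_filter, Fintype.sum_prod_type]
        simp

theorem pow_mul_card_filter_le_sum_pow {α : Type*} [Fintype α] (f : α → ℝ) (hf : ∀ x, 0 ≤ f x)
    {a : ℝ} (ha : 0 ≤ a) (L : ℕ) [DecidablePred fun x ↦ a ≤ f x] :
    a ^ L * #{x | a ≤ f x} ≤ ∑ x, f x ^ L :=
  calc a ^ L * #{x | a ≤ f x} = ∑ x with a ≤ f x, a ^ L := by simp [mul_comm]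
    _ ≤ ∑ x with a ≤ f x, f x ^ L :=
        sum_le_sum fun x hx ↦ pow_le_pow_left₀ ha (mem_filter.1 hx).2 L
    _ ≤ ∑ x, f x ^ L :=
        sum_le_sum_of_subset_of_nonneg (filter_subset _ _) fun x _ _ ↦ pow_nonneg (hf x) L

section Masking

variable {N T L : ℕ}

def coveredSet (M : Finset (Fin N)) (X : Fin N → Fin L → Fin T) : Finset (Fin T) :=
  Finset.univ.filter (fun t : Fin T => ∃ j ∈ M, ∃ l, X j l = t)

theorem coveredTests_eq_card_coveredSet (M : Finset (Fin N)) (X : Fin N → Fin L → Fin T) :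
    coveredTests M X = #(coveredSet M X) :=
  rfl

theorem coveredSet_update_of_notMem {M : Finset (Fin N)} {i : Fin N} (hi : i ∉ M)
    (X : Fin N → Fin L → Fin T) (a : Fin L → Fin T) :
    coveredSet M (update X i a) = coveredSet M X := by
  ext t
  simp only [coveredSet, mem_filter, mem_univ, true_and]
  refine exists_congr fun j ↦ and_congr_right fun hj ↦ ?_
  rw [update_of_ne (ne_of_mem_of_not_mem hj hi)]

theorem masked_iff_forall_mem_coveredSet (𝒦 : Finset (Fin N)) (i : Fin N)
    (X : Fin N → Fin L → Fin T) :
    Masked 𝒦 i X ↔ ∀ l, X i l ∈ coveredSet (𝒦.erase i) X := by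
  simp [Masked, coveredSet, and_assoc, and_left_comm]

instance (𝒦 : Finset (Fin N)) (i : Fin N) : DecidablePred (Masked (T := T) (L := L) 𝒦 i) :=
  fun X ↦ decidable_of_iff' _ (masked_iff_forall_mem_coveredSet 𝒦 i X)

theorem card_pow_mul_card_filter_masked_and (𝒦 : Finset (Fin N)) (i : Fin N)
    (p : (Fin N → Fin L → Fin T) → Prop) [DecidablePred p] (hp : ∀ X a, p (update X i a) ↔ p X) :
    T ^ L * #{X | Masked 𝒦 i X ∧ p X} = ∑ X with p X, coveredTests (𝒦.erase i) X ^ L := by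
  let A X := if p X then piFinset fun _ : Fin L ↦ coveredSet (𝒦.erase i) X else ∅
  have hA : ∀ X a, A (update X i a) = A X := fun X a ↦ by
    simp only [A, hp, coveredSet_update_of_notMem (notMem_erase i 𝒦)]
  calc T ^ L * #{X | Masked 𝒦 i X ∧ p X} = card (Fin L → Fin T) * #{X | X i ∈ A X} := by
        rw [card_fun, Fintype.card_fin, Fintype.card_fin]
        congr 2 with X
        by_cases h : p X <;> simp [A, h, masked_iff_forall_mem_coveredSet]
    _ = ∑ X, #(A X) := card_mul_card_filter_apply_mem i A hA
    _ = ∑ X with p X, coveredTests (𝒦.erase i) X ^ L := by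
        simp [A, sum_filter, apply_ite card, coveredTests_eq_card_coveredSet]

theorem card_pow_mul_card_masked_and_coveredTests_eq (𝒦 : Finset (Fin N)) (i : Fin N) (w : ℕ) :
    T ^ L * #{X : Fin N → Fin L → Fin T | Masked 𝒦 i X ∧ coveredTests (𝒦.erase i) X = w} =
      w ^ L * #{X : Fin N → Fin L → Fin T | coveredTests (𝒦.erase i) X = w} := by
  rw [card_pow_mul_card_filter_masked_and 𝒦 i _ fun X a ↦ by
      simp only [coveredTests_eq_card_coveredSet, coveredSet_update_of_notMem (notMem_erase i 𝒦)],
    Finset.sum_congr rfl fun X hX ↦ by rw [(mem_filter.1 hX).2], sum_const, smul_eq_mul, mul_comm]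

theorem pow_mul_card_le_card_pow_mul_card_masked (𝒦 : Finset (Fin N)) (i : Fin N) {a : ℝ}
    (ha : 0 ≤ a) :
    a ^ L * #{X : Fin N → Fin L → Fin T | a ≤ coveredTests (𝒦.erase i) X} ≤
      T ^ L * #{X : Fin N → Fin L → Fin T | Masked 𝒦 i X} := by
  have hsum := card_pow_mul_card_filter_masked_and (T := T) (L := L) 𝒦 i (fun _ ↦ True)
    fun _ _ ↦ Iff.rfl
  simp only [and_true, filter_true] at hsum
  exact_mod_cast (pow_mul_card_filter_le_sum_pow _ (fun _ ↦ Nat.cast_nonneg _) ha L).trans_eq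
    (by exact_mod_cast hsum.symm)

end Masking

theorem masking_probability_general (N T L : ℕ) (hT : 1 ≤ T)
    (𝒦 : Finset (Fin N)) (i : Fin N) :
    (∀ w : ℕ,
      (Nat.card {X : Fin N → Fin L → Fin T //
          Masked 𝒦 i X ∧ coveredTests (𝒦.erase i) X = w} : ℝ) /
        (Nat.card (Fin N → Fin L → Fin T) : ℝ)
      = ((w : ℝ) / (T : ℝ)) ^ L *
        ((Nat.card {X : Fin N → Fin L → Fin T // coveredTests (𝒦.erase i) X = w} : ℝ) /
          (Nat.card (Fin N → Fin L → Fin T) : ℝ)))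
    ∧
    (∀ c₁ : ℝ, 0 < c₁ → c₁ ≤ 1 →
      (Nat.card {X : Fin N → Fin L → Fin T // Masked 𝒦 i X} : ℝ) /
          (Nat.card (Fin N → Fin L → Fin T) : ℝ)
        ≥ c₁ ^ L *
          ((Nat.card {X : Fin N → Fin L → Fin T //
              c₁ * (T : ℝ) ≤ (coveredTests (𝒦.erase i) X : ℝ)} : ℝ) /
            (Nat.card (Fin N → Fin L → Fin T) : ℝ))) := by
  have hT : (0 : ℝ) < T := by exact_mod_cast hT
  simp only [Nat.card_eq_fintype_card, Fintype.card_subtype]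
  refine ⟨fun w ↦ ?_, fun c₁ hc₁ _ ↦ ?_⟩
  · have hcount := card_pow_mul_card_masked_and_coveredTests_eq (T := T) (L := L) 𝒦 i w
    rw [← mul_div_assoc, div_pow, div_mul_eq_mul_div]
    congr 1
    rw [eq_div_iff (by positivity)]
    exact_mod_cast (mul_comm _ _).trans hcount
  · have hcount := pow_mul_card_le_card_pow_mul_card_masked (T := T) (L := L) 𝒦 i
      (a := c₁ * T) (by positivity)
    rw [ge_iff_le, ← mul_div_assoc]
    gcongr
    rw [mul_pow, mul_right_comm] at hcount
    exact le_of_mul_le_mul_right (hcount.trans_eq (mul_comm _ _)) (pow_pos hT L)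

/-- For the near-constant column weight design (each of the `N` items independently places
itself in `L` tests chosen uniformly with replacement among `T` tests), and a fixed defective
set `𝒦` of size `K` containing `i`:
(i) `P(A_i ∩ {W_{𝒦∖i} = w}) = (w/T)^L · P(W_{𝒦∖i} = w)` for every `w`
    (i.e. `P(A_i | W_{𝒦∖i} = w) = (w/T)^L`), and
(ii) `P(A_i) ≥ c₁^L · P(W_{𝒦∖i} ≥ c₁·T)` for every `0 < c₁ ≤ 1`. -/
theorem masking_probability (N T L K : ℕ) (hT : 1 ≤ T)
    (𝒦 : Finset (Fin N)) (h𝒦 : 𝒦.card = K) (i : Fin N) (hi : i ∈ 𝒦) :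
    (∀ w : ℕ,
      (Nat.card {X : Fin N → Fin L → Fin T //
          Masked 𝒦 i X ∧ coveredTests (𝒦.erase i) X = w} : ℝ) /
        (Nat.card (Fin N → Fin L → Fin T) : ℝ)
      = ((w : ℝ) / (T : ℝ)) ^ L *
        ((Nat.card {X : Fin N → Fin L → Fin T // coveredTests (𝒦.erase i) X = w} : ℝ) /
          (Nat.card (Fin N → Fin L → Fin T) : ℝ)))
    ∧
    (∀ c₁ : ℝ, 0 < c₁ → c₁ ≤ 1 →
      (Nat.card {X : Fin N → Fin L → Fin T // Masked 𝒦 i X} : ℝ) /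
          (Nat.card (Fin N → Fin L → Fin T) : ℝ)
        ≥ c₁ ^ L *
          ((Nat.card {X : Fin N → Fin L → Fin T //
              c₁ * (T : ℝ) ≤ (coveredTests (𝒦.erase i) X : ℝ)} : ℝ) /
            (Nat.card (Fin N → Fin L → Fin T) : ℝ))) :=
  masking_probability_general N T L hT 𝒦 i
end
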